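/- Let y ∈ (0,1) and n ∈ ℤ. Then the principal value integral p.v. ∫₀¹ cot(π(y − x)) e^{2πinx} dx, defined as lim_{δ→0⁺} ∫_{[0,1]∖(y−δ, y+δ)} cot(π(y − x)) e^{2πinx} dx, exists and equals −i · sgn(n) · e^{2πiny}, where sgn(n) is 1 for n > 0, −1 for n < 0, and 0 for n = 0. -/

import Mathlib

/-!
Put `u = e^{2πi(x-y)}`. Then `cot (π(y-x)) = i(1+u)/(1-u)` and `e^{2πimx} = e^{2πimy} uᵐ`, so for
`m ≥ 0` the integrand equals `e^{2πimy} cot (π(y-x))` plus the trigonometric polynomial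
`-i e^{2πimy} (1+u)(1 + u + ⋯ + u^{m-1})`, whose mean over `[0,1]` is `-i e^{2πimy}` for `m > 0`
and `0` for `m = 0`. The excised integral of `cot (π(y-x))` vanishes for small `δ`: its primitive
`-log |sin (π(y-x))| / π` takes the same value at `0` and `1`, and at `y - δ` and `y + δ`. The excised
integral of a continuous function tends to its integral over `[0,1]`. Negative frequencies follow
by complex conjugation.
-/

open Real MeasureTheory Filter Set Complex

open scoped Topology ComplexConjugate

section Excision

variable {E : Type*} [NormedAddCommGroup E] [NormedSpace ℝ E] {f : ℝ → E} {a b c d : ℝ}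

theorem Icc_sdiff_Ioo_eq_union (hcb : c ≤ b) (had : a ≤ d) :
    Icc a b \ Ioo c d = Icc a c ∪ Icc d b := by
  ext x
  simp only [Set.mem_sdiff, mem_Icc, mem_Ioo, mem_union, not_and, not_lt]
  grind

theorem setIntegral_Icc_sdiff_Ioo (hac : a ≤ c) (hcd : c < d) (hdb : d ≤ b)
    (h₁ : IntegrableOn f (Icc a c)) (h₂ : IntegrableOn f (Icc d b)) :
    ∫ x in Icc a b \ Ioo c d, f x = (∫ x in a..c, f x) + ∫ x in d..b, f x := by
  have hdisj : Disjoint (Icc a c) (Icc d b) :=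
    disjoint_left.2 fun x hx hx' => (hx.2.trans_lt hcd).not_ge hx'.1
  rw [Icc_sdiff_Ioo_eq_union (by linarith) (by linarith),
    setIntegral_union hdisj measurableSet_Icc h₁ h₂, integral_Icc_eq_integral_Ioc,
    integral_Icc_eq_integral_Ioc, ← intervalIntegral.integral_of_le hac,
    ← intervalIntegral.integral_of_le hdb]

theorem tendsto_setIntegral_Icc_sdiff_Ioo (hf : Continuous f) {y : ℝ} (hy : y ∈ Ioo a b) :
    Tendsto (fun δ => ∫ x in Icc a b \ Ioo (y - δ) (y + δ), f x) (𝓝[>] 0)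
      (𝓝 (∫ x in a..b, f x)) := by
  have hint : ∀ s t, IntervalIntegrable f volume s t := hf.intervalIntegrable
  set F := fun t => ∫ x in a..t, f x
  have hF : Continuous F := intervalIntegral.continuous_primitive hint a
  have hlim : Tendsto (fun δ => F (y - δ) + (F b - F (y + δ))) (𝓝 0) (𝓝 (F b)) := by
    simpa using (by fun_prop : Continuous fun δ => F (y - δ) + (F b - F (y + δ))).tendsto 0
  refine (hlim.mono_left nhdsWithin_le_nhds).congr' ?_
  filter_upwards [Ioo_mem_nhdsGT (lt_min (sub_pos.2 hy.1) (sub_pos.2 hy.2))] with δ ⟨hδ, hδab⟩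
  have hδa : δ < y - a := hδab.trans_le (min_le_left _ _)
  have hδb : δ < b - y := hδab.trans_le (min_le_right _ _)
  rw [setIntegral_Icc_sdiff_Ioo (by linarith) (by linarith) (by linarith)
      hf.integrableOn_Icc hf.integrableOn_Icc,
    intervalIntegral.integral_interval_sub_left (hint _ _) (hint _ _)]

end Excision

section Cotangent

variable {y δ : ℝ}

theorem sin_pi_mul_sub_ne_zero_of_mem (hy : y ∈ Ioo (0 : ℝ) 1) (hδ : 0 < δ) {x : ℝ}
    (hx : x ∈ Icc (0 : ℝ) 1 \ Ioo (y - δ) (y + δ)) : Real.sin (π * (y - x)) ≠ 0 := by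
  obtain ⟨⟨hx₀, hx₁⟩, hxδ⟩ := hx
  have hxy : x ≠ y := fun h => hxδ ⟨by linarith, by linarith⟩
  rw [Ne, Real.sin_eq_zero_iff_of_lt_of_lt (by nlinarith [pi_pos, hy.1])
    (by nlinarith [pi_pos, hy.2])]
  exact mul_ne_zero pi_ne_zero (sub_ne_zero.2 hxy.symm)

theorem continuousOn_cot_pi_mul_sub (hy : y ∈ Ioo (0 : ℝ) 1) (hδ : 0 < δ) :
    ContinuousOn (fun x => Real.cos (π * (y - x)) / Real.sin (π * (y - x)))
      (Icc (0 : ℝ) 1 \ Ioo (y - δ) (y + δ)) :=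
  (by fun_prop : Continuous fun x => Real.cos (π * (y - x))).continuousOn.div
    (by fun_prop) fun _ hx => sin_pi_mul_sub_ne_zero_of_mem hy hδ hx

theorem integral_cot_pi_mul_sub {a b : ℝ} (h : ∀ x ∈ uIcc a b, Real.sin (π * (y - x)) ≠ 0) :
    ∫ x in a..b, Real.cos (π * (y - x)) / Real.sin (π * (y - x))
      = (Real.log (Real.sin (π * (y - a))) - Real.log (Real.sin (π * (y - b)))) / π := by
  have hderiv : ∀ x ∈ uIcc a b, HasDerivAt (fun t => -Real.log (Real.sin (π * (y - t))) / π)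
      (Real.cos (π * (y - x)) / Real.sin (π * (y - x))) x := by
    intro x hx
    have hsin : HasDerivAt (fun t => Real.sin (π * (y - t))) (Real.cos (π * (y - x)) * -π) x := by
      simpa using (((hasDerivAt_id x).const_sub y).const_mul π).sin
    refine ((hsin.log (h x hx)).neg.div_const π).congr_deriv ?_
    field_simp
  have hcont : ContinuousOn (fun x => Real.cos (π * (y - x)) / Real.sin (π * (y - x)))
      (uIcc a b) :=
    (by fun_prop : Continuous fun x => Real.cos (π * (y - x))).continuousOn.div (by fun_prop) h
  rw [intervalIntegral.integral_eq_sub_of_hasDerivAt hderiv hcont.intervalIntegrable]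
  ring

theorem setIntegral_cot_pi_mul_sub_eq_zero (hδ : 0 < δ) (hδy : δ < y) (hδy' : δ < 1 - y) :
    ∫ x in Icc (0 : ℝ) 1 \ Ioo (y - δ) (y + δ),
      Real.cos (π * (y - x)) / Real.sin (π * (y - x)) = 0 := by
  have hy : y ∈ Ioo (0 : ℝ) 1 := ⟨by linarith, by linarith⟩
  have hcont := continuousOn_cot_pi_mul_sub hy hδ
  have hsin : ∀ x ∈ Icc (0 : ℝ) 1 \ Ioo (y - δ) (y + δ), Real.sin (π * (y - x)) ≠ 0 :=
    fun x hx => sin_pi_mul_sub_ne_zero_of_mem hy hδ hx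
  rw [Icc_sdiff_Ioo_eq_union (by linarith) (by linarith)] at hcont hsin
  rw [setIntegral_Icc_sdiff_Ioo (by linarith) (by linarith) (by linarith)
      ((hcont.mono subset_union_left).integrableOn_compact isCompact_Icc)
      ((hcont.mono subset_union_right).integrableOn_compact isCompact_Icc),
    integral_cot_pi_mul_sub fun x hx => hsin x (Or.inl (by rwa [uIcc_of_le (by linarith)] at hx)),
    integral_cot_pi_mul_sub fun x hx => hsin x (Or.inr (by rwa [uIcc_of_le (by linarith)] at hx))]
  have h₁ : π * (y - (y + δ)) = -(π * (y - (y - δ))) := by ring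
  have h₂ : π * (y - 1) = π * (y - 0) - π := by ring
  rw [h₁, h₂, Real.sin_neg, Real.sin_sub_pi, Real.log_neg_eq_log, Real.log_neg_eq_log]
  ring

end Cotangent

theorem exp_two_pi_I_sub_ne_one_of_sin_ne_zero {x y : ℝ} (h : Real.sin (π * (y - x)) ≠ 0) :
    Complex.exp (2 * π * I * (x - y)) ≠ 1 := by
  rw [Ne, Complex.exp_eq_one_iff]
  rintro ⟨k, hk⟩
  have hxy : x - y = k := by
    apply_fun (· / (2 * π * I)) at hk
    field_simp at hk
    exact_mod_cast hk
  apply h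
  rw [show π * (y - x) = -(k * π) by rw [← neg_sub, hxy]; ring, Real.sin_neg,
    Real.sin_int_mul_pi, neg_zero]

noncomputable def cotExpRemainder (y : ℝ) (m : ℕ) (x : ℝ) : ℂ :=
  -I * Complex.exp (2 * π * I * m * y) *
    ∑ j ∈ Finset.range m, (Complex.exp (2 * π * I * (x - y)) ^ j +
      Complex.exp (2 * π * I * (x - y)) ^ (j + 1))

theorem continuous_cotExpRemainder (y : ℝ) (m : ℕ) : Continuous (cotExpRemainder y m) := by
  unfold cotExpRemainder
  fun_prop

theorem cot_mul_exp_eq {x y : ℝ} (h : Real.sin (π * (y - x)) ≠ 0) (m : ℕ) :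
    ((Real.cos (π * (y - x)) / Real.sin (π * (y - x)) : ℝ) : ℂ) * Complex.exp (2 * π * I * m * x)
      = Complex.exp (2 * π * I * m * y) *
          ((Real.cos (π * (y - x)) / Real.sin (π * (y - x)) : ℝ) : ℂ) + cotExpRemainder y m x := by
  set u := Complex.exp (2 * π * I * (x - y)) with hu
  have hu₁ : u - 1 ≠ 0 := sub_ne_zero.2 (exp_two_pi_I_sub_ne_one_of_sin_ne_zero h)
  have hu₀ : u ≠ 0 := Complex.exp_ne_zero _
  have hcot : ((Real.cos (π * (y - x)) / Real.sin (π * (y - x)) : ℝ) : ℂ)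
      = (u⁻¹ + 1) / (I * (1 - u⁻¹)) := by
    rw [← Real.cot_eq_cos_div_sin, ofReal_cot, cot_eq_exp_ratio,
      show 2 * I * ((π * (y - x) : ℝ) : ℂ) = -(2 * π * I * (x - y)) by push_cast; ring,
      Complex.exp_neg]
  have hexp : Complex.exp (2 * π * I * m * x) = Complex.exp (2 * π * I * m * y) * u ^ m := by
    rw [hu, ← Complex.exp_nat_mul, ← Complex.exp_add]
    ring_nf
  have hsum : ∑ j ∈ Finset.range m, (u ^ j + u ^ (j + 1))
      = (1 + u) * ∑ j ∈ Finset.range m, u ^ j := by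
    rw [Finset.mul_sum]
    exact Finset.sum_congr rfl fun j _ => by ring
  rw [cotExpRemainder, ← hu, hsum, hcot, hexp]
  field_simp
  linear_combination (-(1 + u)) * geom_sum_mul u m +
    ((1 + u) * (u - 1) * ∑ j ∈ Finset.range m, u ^ j) * I_sq

theorem integral_exp_two_pi_I_sub_pow (y : ℝ) (j : ℕ) :
    ∫ x in (0 : ℝ)..1, Complex.exp (2 * π * I * (x - y)) ^ j = if j = 0 then 1 else 0 := by
  rcases Nat.eq_zero_or_pos j with rfl | hj
  · simp
  set c : ℂ := 2 * π * I * j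
  have hc : c ≠ 0 := by simp [c, pi_ne_zero, hj.ne']
  have hperiod : Complex.exp (c * (1 : ℝ)) = Complex.exp (c * (0 : ℝ)) := by
    simpa [c, mul_comm] using Complex.exp_nat_mul_two_pi_mul_I j
  rw [if_neg hj.ne']
  calc ∫ x in (0 : ℝ)..1, Complex.exp (2 * π * I * (x - y)) ^ j
      = ∫ x in (0 : ℝ)..1, Complex.exp (-c * y) * Complex.exp (c * x) := by
        refine intervalIntegral.integral_congr fun x _ => ?_
        simp only [← Complex.exp_nat_mul, ← Complex.exp_add, c]
        ring_nf
    _ = 0 := by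
        rw [intervalIntegral.integral_const_mul, integral_exp_mul_complex hc, hperiod]
        simp

theorem integral_cotExpRemainder (y : ℝ) (m : ℕ) :
    ∫ x in (0 : ℝ)..1, cotExpRemainder y m x
      = -I * ((m : ℤ).sign : ℂ) * Complex.exp (2 * π * I * m * y) := by
  have hint : ∀ j : ℕ, IntervalIntegrable (fun x : ℝ => Complex.exp (2 * π * I * (x - y)) ^ j)
      volume 0 1 := fun j => (by fun_prop : Continuous _).intervalIntegrable 0 1
  simp only [cotExpRemainder, intervalIntegral.integral_const_mul]
  rw [intervalIntegral.integral_finsetSum fun j _ => (hint j).add (hint (j + 1))]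
  simp only [intervalIntegral.integral_add (hint _) (hint _), integral_exp_two_pi_I_sub_pow,
    Nat.add_one_ne_zero, if_false, add_zero, Finset.sum_ite_eq', Finset.mem_range]
  rcases Nat.eq_zero_or_pos m with rfl | hm
  · simp
  · simp [hm, Int.sign_natCast_of_ne_zero hm.ne']

theorem tendsto_setIntegral_cot_mul_exp_natCast {y : ℝ} (hy : y ∈ Ioo (0 : ℝ) 1) (m : ℕ) :
    Tendsto (fun δ => ∫ x in Icc (0 : ℝ) 1 \ Ioo (y - δ) (y + δ),
        ((Real.cos (π * (y - x)) / Real.sin (π * (y - x)) : ℝ) : ℂ) *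
          Complex.exp (2 * π * I * m * x))
      (𝓝[>] 0) (𝓝 (-I * ((m : ℤ).sign : ℂ) * Complex.exp (2 * π * I * m * y))) := by
  rw [← integral_cotExpRemainder]
  refine (tendsto_setIntegral_Icc_sdiff_Ioo (continuous_cotExpRemainder y m) hy).congr' ?_
  filter_upwards [Ioo_mem_nhdsGT (lt_min hy.1 (sub_pos.2 hy.2))] with δ ⟨hδ, hδy⟩
  set S := Icc (0 : ℝ) 1 \ Ioo (y - δ) (y + δ)
  have hS : IsCompact S := isCompact_Icc.diff isOpen_Ioo
  have hcot : IntegrableOn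
      (fun x => ((Real.cos (π * (y - x)) / Real.sin (π * (y - x)) : ℝ) : ℂ)) S :=
    (continuous_ofReal.comp_continuousOn (continuousOn_cot_pi_mul_sub hy hδ)).integrableOn_compact hS
  have hR : IntegrableOn (cotExpRemainder y m) S :=
    (continuous_cotExpRemainder y m).continuousOn.integrableOn_compact hS
  calc ∫ x in S, cotExpRemainder y m x
      = ∫ x in S, (Complex.exp (2 * π * I * m * y) *
          ((Real.cos (π * (y - x)) / Real.sin (π * (y - x)) : ℝ) : ℂ) + cotExpRemainder y m x) := by
        rw [integral_add (hcot.const_mul _) hR, integral_const_mul, integral_complex_ofReal,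
          setIntegral_cot_pi_mul_sub_eq_zero hδ (hδy.trans_le (min_le_left _ _))
            (hδy.trans_le (min_le_right _ _))]
        simp
    _ = _ := setIntegral_congr_fun (measurableSet_Icc.diff measurableSet_Ioo)
        fun x hx => (cot_mul_exp_eq (sin_pi_mul_sub_ne_zero_of_mem hy hδ hx) m).symm

theorem conj_setIntegral_cot_mul_exp (s : Set ℝ) (y : ℝ) (ν : ℂ) :
    conj (∫ x in s, ((Real.cos (π * (y - x)) / Real.sin (π * (y - x)) : ℝ) : ℂ) *
        Complex.exp (2 * π * I * ν * x))
      = ∫ x in s, ((Real.cos (π * (y - x)) / Real.sin (π * (y - x)) : ℝ) : ℂ) *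
        Complex.exp (2 * π * I * (-conj ν) * x) := by
  rw [← integral_conj]
  refine integral_congr_ae (Eventually.of_forall fun x => ?_)
  simp only [map_mul, conj_ofReal, ← Complex.exp_conj, map_ofNat, conj_I]
  ring_nf

theorem pv_integral_cot_exp (y : ℝ) (hy : y ∈ Set.Ioo (0:ℝ) 1) (n : ℤ) :
    Filter.Tendsto
      (fun δ : ℝ => ∫ x in Set.Icc (0:ℝ) 1 \ Set.Ioo (y - δ) (y + δ),
        (↑(Real.cos (π * (y - x)) / Real.sin (π * (y - x))) : ℂ) *
          Complex.exp (2 * π * Complex.I * n * x))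
      (nhdsWithin 0 (Set.Ioi 0))
      (nhds (-Complex.I * (n.sign : ℂ) * Complex.exp (2 * π * Complex.I * n * y))) := by
  obtain ⟨m, rfl | rfl⟩ := Int.eq_nat_or_neg n
  · simpa using tendsto_setIntegral_cot_mul_exp_natCast hy m
  · have h := (continuous_conj.tendsto _).comp (tendsto_setIntegral_cot_mul_exp_natCast hy m)
    simp only [Function.comp_def, conj_setIntegral_cot_mul_exp, map_natCast, map_mul, map_neg,
      conj_I, map_intCast, ← Complex.exp_conj, map_ofNat, conj_ofReal, Int.cast_neg,
      Int.cast_natCast, Int.sign_neg] at h ⊢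
    convert h using 2
    ring_nf
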